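/- arXiv:2604.01629 — 2 statements merged into one kernel-verified Lean document; each statement's English description precedes it below -/
import Mathlib

section
/- For every real ν ≥ 2 there exists a constant c(ν) > 0, depending only on ν, such that for all probability measures G and Ĝ on (0,∞) and all reals a > 0 and b > 0: ∫_{0 < t ≤ b} ( ∫_{|x| > a} |h_G(x, t) − h_Ĝ(x, t)| dx ) · f_G(t; ν) dt ≤ 2 · { c(ν)·(b/a)·( ∫_0^∞ (f_G(w; ν+1) − f_Ĝ(w; ν+1))² dw )^{1/2} + ∫_0^∞ |f_G(w; ν) − f_Ĝ(w; ν)| dw }, where the inequality is understood in [0, ∞]. -/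
open MeasureTheory Real
open scoped ENNReal

/-- `g_ν(t; σ²)`: the density of `(σ²/ν)·χ²_ν`, i.e. the Gamma(ν/2, rate ν/(2σ²)) density. -/
noncomputable def gdens (ν σ2 t : ℝ) : ℝ :=
  (1 / Real.Gamma (ν / 2)) * (ν / (2 * σ2)) ^ (ν / 2) * t ^ (ν / 2 - 1) *
    Real.exp (-(ν * t) / (2 * σ2))

/-- `φ(x; σ²) = (2πσ²)^{−1/2}·exp(−x²/(2σ²))`: the `N(0, σ²)` density. -/
noncomputable def phidens (x σ2 : ℝ) : ℝ :=
  (2 * Real.pi * σ2) ^ (-(1 / 2) : ℝ) * Real.exp (-(x ^ 2) / (2 * σ2))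

/-- `f_G(t; ν) = ∫ g_ν(t; σ²) dG(σ²)`: the marginal density of `S²`. -/
noncomputable def fGdens (G : Measure ℝ) (ν t : ℝ) : ℝ :=
  ∫ σ2, gdens ν σ2 t ∂G

/-- `h_G(x, t)`: the conditional null density of `X` given `μ = 0, S² = t`. -/
noncomputable def hGdens (G : Measure ℝ) (ν x t : ℝ) : ℝ :=
  (∫ σ2, phidens x σ2 * gdens ν σ2 t ∂G) / fGdens G ν t

/-!
Write `N_G(x, t) = h_G(x, t) f_G(t; ν) = ∫ φ(x; σ²) g_ν(t; σ²) dG(σ²)`. Then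
`(h_G − h_Ĝ) f_G = (N_G − N_Ĝ) + h_Ĝ (f_Ĝ − f_G)`, and since `h_Ĝ(·, t)` is a probability density
the second term contributes at most `∫ |f_G − f_Ĝ|`.

For the first term, `φ(x; σ²) g_ν(t; σ²) = k(x, t) g_{ν+1}(w; σ²)` with the pooled variance
`w = (ν t + x²)/(ν + 1)`, so `N_G − N_Ĝ = k · (f_G − f_Ĝ)(w; ν + 1)`, and `k ≲ w^{-1/2}` when `ν ≥ 2`.
Substituting `w` for `t` and integrating out `x` over `|x| > a`, the `x`-section over `w` has length
`O(b/√w)` and is empty for `w ≤ a²/(ν + 1)`. What remains is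
`b ∫_{w > a²/(ν+1)} |f_G − f_Ĝ|(w; ν + 1) dw/w`, which Cauchy–Schwarz bounds by
`(b/a) ‖f_G(·; ν + 1) − f_Ĝ(·; ν + 1)‖₂`.
-/

open ProbabilityTheory

lemma rpow_mul_exp_neg_le {p y : ℝ} (hp : 0 < p) (hy : 0 ≤ y) :
    y ^ p * exp (-y) ≤ p ^ p * exp (-p) := by
  have h : (y / p) ^ p ≤ exp (y - p) :=
    calc (y / p) ^ p ≤ exp (y / p - 1) ^ p :=
          rpow_le_rpow (by positivity) (by linarith [add_one_le_exp (y / p - 1)]) hp.le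
      _ = exp (y - p) := by rw [← exp_mul]; congr 1; field_simp
  rw [div_rpow hy hp.le, div_le_iff₀ (by positivity)] at h
  calc y ^ p * exp (-y) ≤ exp (y - p) * p ^ p * exp (-y) := by gcongr
    _ = p ^ p * exp (-p) := by rw [mul_right_comm, ← exp_add]; ring_nf

lemma sqrt_sub_sqrt_sub_le {r d : ℝ} (hr : 0 < r) (hd : 0 ≤ d) : √r - √(r - d) ≤ d / √r := by
  have hsr := sqrt_pos.2 hr
  rw [le_div_iff₀ hsr]
  rcases le_or_gt d r with hdr | hrd
  · have h := mul_self_sqrt (sub_nonneg.2 hdr)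
    nlinarith [mul_self_sqrt hr.le, sqrt_nonneg (r - d), sqrt_le_sqrt (by linarith : r - d ≤ r)]
  · rw [sqrt_eq_zero'.2 (by linarith : r - d ≤ 0), sub_zero, mul_self_sqrt hr.le]
    exact hrd.le

lemma volume_setOf_sq_mem_Ico_le {r d : ℝ} (hr : 0 < r) (hd : 0 ≤ d) :
    volume {x : ℝ | r - d ≤ x ^ 2 ∧ x ^ 2 < r} ≤ ENNReal.ofReal (2 * d / √r) := by
  have hball (q : ℝ) : {x : ℝ | x ^ 2 < q} = Set.Ioo (-√q) √q := Set.ext fun _ => sq_lt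
  have hsub : Set.Ioo (-√(r - d)) √(r - d) ⊆ Set.Ioo (-√r) √r :=
    Set.Ioo_subset_Ioo (by gcongr; linarith) (by gcongr; linarith)
  have hband : {x : ℝ | r - d ≤ x ^ 2 ∧ x ^ 2 < r}
      = Set.Ioo (-√r) √r \ Set.Ioo (-√(r - d)) √(r - d) := by
    rw [← hball, ← hball]; ext x; simp only [Set.mem_ofPred_eq, Set.mem_sdiff, not_lt]; tauto
  rw [hband, measure_sdiff hsub measurableSet_Ioo.nullMeasurableSet measure_Ioo_lt_top.ne,
    volume_Ioo, volume_Ioo, ← ENNReal.ofReal_sub _ (by linarith [sqrt_nonneg (r - d)])]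
  refine ENNReal.ofReal_le_ofReal ?_
  have := sqrt_sub_sqrt_sub_le hr hd
  rw [mul_div_assoc]
  linarith

lemma setLIntegral_preimage_mul_add {c d : ℝ} (hc : 0 < c) {F : ℝ → ℝ≥0∞} (hF : Measurable F)
    {s : Set ℝ} (hs : MeasurableSet s) :
    ∫⁻ t in (fun t => c * t + d) ⁻¹' s, F (c * t + d) = ENNReal.ofReal c⁻¹ * ∫⁻ v in s, F v := by
  have hmap : Measure.map (fun t : ℝ => c * t + d) volume = ENNReal.ofReal c⁻¹ • volume := by
    rw [show (fun t : ℝ => c * t + d) = (· + d) ∘ (c * ·) from rfl,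
      ← Measure.map_map (measurable_add_const d) (measurable_const_mul c),
      Real.map_volume_mul_left hc.ne', Measure.map_smul, map_add_right_eq_self,
      abs_of_pos (inv_pos.2 hc)]
  rw [← setLIntegral_map hs hF (by fun_prop), hmap, Measure.restrict_smul, lintegral_smul_measure,
    smul_eq_mul]

lemma setLIntegral_Ioi_ofReal_div_sq {r C : ℝ} (hr : 0 < r) (hC : 0 ≤ C) :
    ∫⁻ v in Set.Ioi r, ENNReal.ofReal (C / v) ^ (2 : ℝ) = ENNReal.ofReal (C / √r) ^ (2 : ℝ) := by
  have hpow (v : ℝ) (hv : 0 < v) :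
      ENNReal.ofReal (C / v) ^ (2 : ℝ) = ENNReal.ofReal (C ^ 2 * v ^ (-2 : ℝ)) := by
    rw [ENNReal.ofReal_rpow_of_nonneg (by positivity) two_pos.le, div_rpow hC hv.le,
      rpow_neg hv.le, div_eq_mul_inv]
    simp only [rpow_two]
  have hint : IntegrableOn (fun v : ℝ => C ^ 2 * v ^ (-2 : ℝ)) (Set.Ioi r) :=
    (integrableOn_Ioi_rpow_of_lt (by norm_num) hr).const_mul _
  rw [setLIntegral_congr_fun measurableSet_Ioi fun v hv => hpow v (hr.trans hv),
    ← ofReal_integral_eq_lintegral_ofReal hint (ae_restrict_of_forall_mem measurableSet_Ioi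
      fun v hv => mul_nonneg (sq_nonneg C) (rpow_nonneg (hr.trans hv).le _)),
    integral_const_mul, integral_Ioi_rpow_of_lt (by norm_num) hr, hpow _ (sqrt_pos.2 hr),
    sqrt_eq_rpow, ← rpow_mul hr.le]
  norm_num

lemma setLIntegral_Ioi_ofReal_div_mul_le {r C : ℝ} (hr : 0 < r) (hC : 0 ≤ C) {Δ : ℝ → ℝ}
    (hΔ : Measurable Δ) :
    ∫⁻ v in Set.Ioi r, ENNReal.ofReal (C / v) * ENNReal.ofReal |Δ v|
      ≤ ENNReal.ofReal (C / √r) * (∫⁻ v in Set.Ioi r, ENNReal.ofReal (Δ v ^ 2)) ^ (1 / 2 : ℝ) := by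
  have hsq (y : ℝ) : ENNReal.ofReal |y| ^ (2 : ℝ) = ENNReal.ofReal (y ^ 2) := by
    rw [ENNReal.ofReal_rpow_of_nonneg (abs_nonneg _) two_pos.le, rpow_two, sq_abs]
  have := ENNReal.lintegral_mul_le_Lp_mul_Lq (volume.restrict (Set.Ioi r))
    Real.HolderConjugate.two_two (f := fun v => ENNReal.ofReal (C / v))
    (g := fun v => ENNReal.ofReal |Δ v|) (by fun_prop) (by fun_prop)
  simp only [Pi.mul_apply, hsq, setLIntegral_Ioi_ofReal_div_sq hr hC] at this
  rwa [← ENNReal.rpow_mul, mul_one_div_cancel two_ne_zero, ENNReal.rpow_one] at this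

section Tail

variable {c p a b : ℝ}

lemma setLIntegral_Ioc_comp_div (hc : 0 < c) (hp : 0 < p) {F : ℝ → ℝ≥0∞} (hF : Measurable F)
    (x : ℝ) :
    ∫⁻ t in Set.Ioc 0 b, F ((c * t + x ^ 2) / p)
      = ENNReal.ofReal (p / c) * ∫⁻ v in Set.Ioc (x ^ 2 / p) ((c * b + x ^ 2) / p), F v := by
  have hpre : (fun t => c / p * t + x ^ 2 / p) ⁻¹' Set.Ioc (x ^ 2 / p) ((c * b + x ^ 2) / p)
      = Set.Ioc 0 b := by
    ext t
    simp only [Set.mem_preimage, Set.mem_Ioc]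
    rw [show c / p * t + x ^ 2 / p = (c * t + x ^ 2) / p by ring,
      div_lt_div_iff_of_pos_right hp, div_le_div_iff_of_pos_right hp]
    constructor <;> rintro ⟨h1, h2⟩ <;> constructor <;> nlinarith
  have := setLIntegral_preimage_mul_add (d := x ^ 2 / p) (div_pos hc hp) hF
    (measurableSet_Ioc (a := x ^ 2 / p) (b := (c * b + x ^ 2) / p))
  rw [hpre, inv_div] at this
  simp_rw [← this, add_div, mul_div_right_comm]

lemma volume_abs_gt_inter_band_le (hc : 0 < c) (hp : 0 < p) (ha : 0 ≤ a) (hb : 0 ≤ b) (v : ℝ) :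
    ENNReal.ofReal (p / c) *
        volume ({x : ℝ | a < |x|} ∩ {x | x ^ 2 / p < v ∧ v ≤ (c * b + x ^ 2) / p})
      ≤ (Set.Ioi (a ^ 2 / p)).indicator (fun v => ENNReal.ofReal (2 * √p * b / √v)) v := by
  by_cases hv : a ^ 2 / p < v
  · have hv0 : 0 < v := lt_of_le_of_lt (by positivity) hv
    have hsub : {x : ℝ | a < |x|} ∩ {x | x ^ 2 / p < v ∧ v ≤ (c * b + x ^ 2) / p}
        ⊆ {x | p * v - c * b ≤ x ^ 2 ∧ x ^ 2 < p * v} := by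
      rintro x ⟨-, h1, h2⟩
      rw [div_lt_iff₀ hp] at h1
      rw [le_div_iff₀ hp] at h2
      constructor <;> linarith
    rw [Set.indicator_of_mem (show v ∈ Set.Ioi (a ^ 2 / p) from hv)]
    grw [hsub, volume_setOf_sq_mem_Ico_le (by positivity) (by positivity),
      ← ENNReal.ofReal_mul (by positivity)]
    refine le_of_eq (congrArg ENNReal.ofReal ?_)
    have := sqrt_pos.2 hp
    rw [sqrt_mul hp.le]
    field_simp
    rw [sq_sqrt hp.le]
    ring
  · have hempty : {x : ℝ | a < |x|} ∩ {x | x ^ 2 / p < v ∧ v ≤ (c * b + x ^ 2) / p} = ∅ := by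
      refine Set.eq_empty_of_forall_notMem fun x hx => ?_
      obtain ⟨hxa, hxv, -⟩ := hx
      have : a ^ 2 < x ^ 2 := by rw [← sq_abs x]; exact pow_lt_pow_left₀ hxa ha two_ne_zero
      exact hv (lt_of_le_of_lt (by gcongr) hxv)
    simp [hempty]

/-- Substituting `v = (c t + x²)/p` for `t` and then integrating out `x` first: the `x`-section
over `v` is a band of width `O(b/√v)`, empty unless `v > a²/p`. -/
lemma lintegral_Ioc_setLIntegral_abs_gt_le (hc : 0 < c) (hp : 0 < p) (ha : 0 ≤ a) (hb : 0 ≤ b)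
    {F : ℝ → ℝ≥0∞} (hF : Measurable F) :
    ∫⁻ t in Set.Ioc 0 b, ∫⁻ x in {x : ℝ | a < |x|}, F ((c * t + x ^ 2) / p)
      ≤ ∫⁻ v in Set.Ioi (a ^ 2 / p), ENNReal.ofReal (2 * √p * b / √v) * F v := by
  set E := {x : ℝ | a < |x|}
  set S : Set (ℝ × ℝ) := {q | q.1 ^ 2 / p < q.2 ∧ q.2 ≤ (c * b + q.1 ^ 2) / p}
  have hS : MeasurableSet S := by
    simp only [S, Set.ofPred_and]
    exact (measurableSet_lt (by fun_prop) (by fun_prop)).inter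
      (measurableSet_le (by fun_prop) (by fun_prop))
  have hband (v : ℝ) : MeasurableSet ((·, v) ⁻¹' S) := hS.preimage measurable_prodMk_right
  have hSF : Measurable (Function.uncurry fun x v => ((·, v) ⁻¹' S).indicator (fun _ => F v) x) :=
    (hF.comp measurable_snd).indicator hS
  calc ∫⁻ t in Set.Ioc 0 b, ∫⁻ x in E, F ((c * t + x ^ 2) / p)
      = ∫⁻ x in E, ∫⁻ t in Set.Ioc 0 b, F ((c * t + x ^ 2) / p) :=
        lintegral_lintegral_swap (hF.comp (by fun_prop)).aemeasurable
    _ = ENNReal.ofReal (p / c) * ∫⁻ v, ∫⁻ x in E, ((·, v) ⁻¹' S).indicator (fun _ => F v) x := by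
        simp_rw [setLIntegral_Ioc_comp_div hc hp hF, ← lintegral_indicator measurableSet_Ioc]
        rw [lintegral_const_mul' _ _ ENNReal.ofReal_ne_top,
          ← lintegral_lintegral_swap hSF.aemeasurable]
        rfl
    _ = ∫⁻ v, F v * (ENNReal.ofReal (p / c) * volume (E ∩ (·, v) ⁻¹' S)) := by
        rw [← lintegral_const_mul' _ _ ENNReal.ofReal_ne_top]
        refine lintegral_congr fun v => ?_
        rw [lintegral_indicator_const (hband v), Measure.restrict_apply (hband v), Set.inter_comm]
        ring
    _ ≤ ∫⁻ v, F v * (Set.Ioi (a ^ 2 / p)).indicator (fun v => ENNReal.ofReal (2 * √p * b / √v)) v :=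
        lintegral_mono fun v => by gcongr; exact volume_abs_gt_inter_band_le hc hp ha hb v
    _ = _ := by
        rw [← lintegral_indicator measurableSet_Ioi]
        refine lintegral_congr fun v => ?_
        by_cases hv : v ∈ Set.Ioi (a ^ 2 / p) <;> simp [hv, mul_comm]

end Tail

lemma gdens_pos {ν σ2 t : ℝ} (hν : 0 < ν) (hσ : 0 < σ2) (ht : 0 < t) : 0 < gdens ν σ2 t := by
  have := Gamma_pos_of_pos (half_pos hν)
  unfold gdens
  positivity

lemma gdens_le {ν σ2 t : ℝ} (hν : 0 < ν) (hσ : 0 < σ2) (ht : 0 < t) :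
    gdens ν σ2 t ≤ (ν / 2) ^ (ν / 2) * exp (-(ν / 2)) / Gamma (ν / 2) / t := by
  have hΓ := Gamma_pos_of_pos (half_pos hν)
  set y := ν * t / (2 * σ2)
  have hgdens : gdens ν σ2 t = y ^ (ν / 2) * exp (-y) / Gamma (ν / 2) / t := by
    rw [gdens, show y = ν / (2 * σ2) * t by ring, mul_rpow (by positivity) ht.le,
      rpow_sub_one ht.ne']
    field_simp
  rw [hgdens]
  gcongr ?_ / _ / _
  exact rpow_mul_exp_neg_le (half_pos hν) (by positivity)

lemma phidens_eq_gaussianPDFReal (x : ℝ) {σ2 : ℝ} (hσ : 0 ≤ σ2) :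
    phidens x σ2 = gaussianPDFReal 0 σ2.toNNReal x := by
  rw [phidens, gaussianPDFReal, Real.coe_toNNReal _ hσ, sqrt_eq_rpow, ← rpow_neg_one,
    ← rpow_mul (by positivity), sub_zero]
  norm_num

lemma phidens_nonneg (x : ℝ) {σ2 : ℝ} (hσ : 0 ≤ σ2) : 0 ≤ phidens x σ2 := by
  rw [phidens_eq_gaussianPDFReal x hσ]
  exact gaussianPDFReal_nonneg _ _ _

lemma lintegral_phidens {σ2 : ℝ} (hσ : 0 < σ2) : ∫⁻ x, ENNReal.ofReal (phidens x σ2) = 1 := by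
  simp_rw [phidens_eq_gaussianPDFReal _ hσ.le]
  exact lintegral_gaussianPDFReal_eq_one 0 (by simpa using hσ)

/-- `(ν t + x²)/(ν + 1)`: the pooled variance estimate with `ν + 1` degrees of freedom. -/
noncomputable def pooledVar (ν x t : ℝ) : ℝ := (ν * t + x ^ 2) / (ν + 1)

noncomputable def pooledConst (ν : ℝ) : ℝ :=
  Gamma ((ν + 1) / 2) / (Gamma (ν / 2) * √π) * ν ^ (ν / 2) / (ν + 1) ^ ((ν + 1) / 2)

noncomputable def pooledFactor (ν x t : ℝ) : ℝ :=
  pooledConst ν * t ^ (ν / 2 - 1) / pooledVar ν x t ^ ((ν - 1) / 2)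

lemma pooledVar_pos {ν x t : ℝ} (hν : 0 < ν) (ht : 0 < t) : 0 < pooledVar ν x t := by
  unfold pooledVar; positivity

lemma pooledConst_pos {ν : ℝ} (hν : 0 < ν) : 0 < pooledConst ν := by
  have := Gamma_pos_of_pos (half_pos hν)
  have : 0 < Gamma ((ν + 1) / 2) := Gamma_pos_of_pos (by positivity)
  unfold pooledConst; positivity

lemma pooledFactor_nonneg {ν x t : ℝ} (hν : 0 < ν) (ht : 0 < t) : 0 ≤ pooledFactor ν x t := by
  have := pooledConst_pos hν
  have := pooledVar_pos (x := x) hν ht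
  unfold pooledFactor; positivity

lemma phidens_mul_gdens (x : ℝ) {ν σ2 t : ℝ} (hν : 0 < ν) (hσ : 0 < σ2) (ht : 0 < t) :
    phidens x σ2 * gdens ν σ2 t = pooledFactor ν x t * gdens (ν + 1) σ2 (pooledVar ν x t) := by
  have hΓ := Gamma_pos_of_pos (half_pos hν)
  have hΓ' : 0 < Gamma ((ν + 1) / 2) := Gamma_pos_of_pos (by positivity)
  have hw := pooledVar_pos (x := x) hν ht
  have hs : 0 < 2 * σ2 := by positivity
  have hexp : exp (-x ^ 2 / (2 * σ2)) * exp (-(ν * t) / (2 * σ2))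
      = exp (-((ν + 1) * pooledVar ν x t) / (2 * σ2)) := by
    rw [← exp_add, pooledVar]; congr 1; field_simp; ring
  have hφ : (2 * π * σ2) ^ (-(1 / 2) : ℝ) = (√π * √(2 * σ2))⁻¹ := by
    rw [← sqrt_mul pi_pos.le, sqrt_eq_rpow, ← rpow_neg (by positivity)]; ring_nf
  rw [phidens, gdens, gdens, pooledFactor, pooledConst, hφ, div_rpow hν.le hs.le,
    div_rpow (by positivity) hs.le, show (ν + 1) / 2 = 1 / 2 + ν / 2 by ring,
    rpow_add hs, ← sqrt_eq_rpow, show 1 / 2 + ν / 2 - 1 = (ν - 1) / 2 by ring,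
    ← hexp]
  field_simp

lemma pooledFactor_le {ν : ℝ} (x : ℝ) {t : ℝ} (hν : 2 ≤ ν) (ht : 0 < t) :
    pooledFactor ν x t ≤ pooledConst ν * ((ν + 1) / ν) ^ (ν / 2 - 1) / √(pooledVar ν x t) := by
  have hν0 : 0 < ν := by linarith
  have hw := pooledVar_pos (x := x) hν0 ht
  have htw : t ≤ (ν + 1) / ν * pooledVar ν x t := by
    rw [pooledVar, div_mul_div_comm, le_div_iff₀ (by positivity)]
    nlinarith [sq_nonneg x]
  have hsplit : pooledVar ν x t ^ ((ν - 1) / 2)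
      = pooledVar ν x t ^ (ν / 2 - 1) * √(pooledVar ν x t) := by
    rw [sqrt_eq_rpow, ← rpow_add hw]; ring_nf
  rw [pooledFactor, hsplit, mul_div_assoc, mul_div_assoc, ← div_div]
  have := pooledConst_pos hν0
  gcongr
  rw [div_le_iff₀ (by positivity), ← mul_rpow (by positivity) hw.le]
  exact rpow_le_rpow ht.le htw (by linarith)

@[fun_prop]
lemma measurable_fGdens (G : Measure ℝ) [SFinite G] (ν : ℝ) : Measurable (fGdens G ν) := by
  have h : StronglyMeasurable fun p : ℝ × ℝ => gdens ν p.2 p.1 := by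
    apply Measurable.stronglyMeasurable; unfold gdens; fun_prop
  exact h.integral_prod_right'.measurable

section Mixture

variable {G : Measure ℝ} {ν t : ℝ}

lemma integrable_gdens [IsFiniteMeasure G] (hG : ∀ᵐ σ2 ∂G, 0 < σ2) (hν : 0 < ν) (ht : 0 < t) :
    Integrable (fun σ2 => gdens ν σ2 t) G := by
  refine Integrable.mono'
    (integrable_const ((ν / 2) ^ (ν / 2) * exp (-(ν / 2)) / Gamma (ν / 2) / t))
    (by unfold gdens; fun_prop) ?_
  filter_upwards [hG] with σ2 hσ
  rw [norm_of_nonneg (gdens_pos hν hσ ht).le]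
  exact gdens_le hν hσ ht

lemma ofReal_fGdens [IsFiniteMeasure G] (hG : ∀ᵐ σ2 ∂G, 0 < σ2) (hν : 0 < ν) (ht : 0 < t) :
    ENNReal.ofReal (fGdens G ν t) = ∫⁻ σ2, ENNReal.ofReal (gdens ν σ2 t) ∂G :=
  ofReal_integral_eq_lintegral_ofReal (integrable_gdens hG hν ht)
    (by filter_upwards [hG] with σ2 hσ using (gdens_pos hν hσ ht).le)

lemma fGdens_pos [IsProbabilityMeasure G] (hG : ∀ᵐ σ2 ∂G, 0 < σ2) (hν : 0 < ν) (ht : 0 < t) :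
    0 < fGdens G ν t := by
  have hpos : ∀ᵐ σ2 ∂G, 0 < gdens ν σ2 t := hG.mono fun σ2 hσ => gdens_pos hν hσ ht
  rw [fGdens, integral_pos_iff_support_of_nonneg_ae (hpos.mono fun _ h => h.le)
    (integrable_gdens hG hν ht), measure_of_measure_compl_eq_zero
    (s := Function.support fun σ2 => gdens ν σ2 t) (hpos.mono fun _ h => h.ne'), measure_univ]
  exact one_pos

lemma integral_phidens_mul_gdens (hG : ∀ᵐ σ2 ∂G, 0 < σ2) (x : ℝ) (hν : 0 < ν) (ht : 0 < t) :
    ∫ σ2, phidens x σ2 * gdens ν σ2 t ∂G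
      = pooledFactor ν x t * fGdens G (ν + 1) (pooledVar ν x t) := by
  rw [fGdens, ← integral_const_mul]
  exact integral_congr_ae (by filter_upwards [hG] with σ2 hσ using phidens_mul_gdens x hν hσ ht)

lemma integrable_phidens_mul_gdens [IsFiniteMeasure G] (hG : ∀ᵐ σ2 ∂G, 0 < σ2) (x : ℝ)
    (hν : 0 < ν) (ht : 0 < t) : Integrable (fun σ2 => phidens x σ2 * gdens ν σ2 t) G :=
  ((integrable_gdens (ν := ν + 1) hG (by linarith) (pooledVar_pos hν ht)).const_mul _).congr
    (by filter_upwards [hG] with σ2 hσ using (phidens_mul_gdens x hν hσ ht).symm)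

lemma hGdens_mul_fGdens [IsProbabilityMeasure G] (hG : ∀ᵐ σ2 ∂G, 0 < σ2) (x : ℝ) (hν : 0 < ν)
    (ht : 0 < t) :
    hGdens G ν x t * fGdens G ν t = pooledFactor ν x t * fGdens G (ν + 1) (pooledVar ν x t) := by
  rw [hGdens, div_mul_cancel₀ _ (fGdens_pos hG hν ht).ne', integral_phidens_mul_gdens hG x hν ht]

lemma hGdens_nonneg (hG : ∀ᵐ σ2 ∂G, 0 < σ2) (x : ℝ) (hν : 0 < ν) (ht : 0 < t) :
    0 ≤ hGdens G ν x t := by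
  refine div_nonneg (integral_nonneg_of_ae ?_) (integral_nonneg_of_ae ?_) <;>
    filter_upwards [hG] with σ2 hσ
  · exact mul_nonneg (phidens_nonneg x hσ.le) (gdens_pos hν hσ ht).le
  · exact (gdens_pos hν hσ ht).le

lemma lintegral_hGdens [IsProbabilityMeasure G] (hG : ∀ᵐ σ2 ∂G, 0 < σ2) (hν : 0 < ν)
    (ht : 0 < t) : ∫⁻ x, ENNReal.ofReal (hGdens G ν x t) = 1 := by
  have hf := fGdens_pos hG hν ht
  have hnum : ∀ x, ENNReal.ofReal (∫ σ2, phidens x σ2 * gdens ν σ2 t ∂G)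
      = ∫⁻ σ2, ENNReal.ofReal (phidens x σ2) * ENNReal.ofReal (gdens ν σ2 t) ∂G := by
    intro x
    rw [ofReal_integral_eq_lintegral_ofReal (integrable_phidens_mul_gdens hG x hν ht) (by
      filter_upwards [hG] with σ2 hσ
      exact mul_nonneg (phidens_nonneg x hσ.le) (gdens_pos hν hσ ht).le)]
    refine lintegral_congr_ae ?_
    filter_upwards [hG] with σ2 hσ
    exact ENNReal.ofReal_mul (phidens_nonneg x hσ.le)
  have hswap : ∫⁻ x, ∫⁻ σ2, ENNReal.ofReal (phidens x σ2) * ENNReal.ofReal (gdens ν σ2 t) ∂G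
      = ENNReal.ofReal (fGdens G ν t) := by
    rw [lintegral_lintegral_swap (by unfold phidens gdens; fun_prop), ofReal_fGdens hG hν ht]
    refine lintegral_congr_ae ?_
    filter_upwards [hG] with σ2 hσ
    rw [lintegral_mul_const' _ _ ENNReal.ofReal_ne_top, lintegral_phidens hσ, one_mul]
  simp_rw [hGdens, ENNReal.ofReal_div_of_pos hf, div_eq_mul_inv]
  rw [lintegral_mul_const' _ _ (by simpa using hf), ← div_eq_mul_inv]
  simp_rw [hnum]
  rw [hswap, ENNReal.div_self (by simpa using hf) ENNReal.ofReal_ne_top]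

end Mixture

section TwoMixtures

variable {G G' : Measure ℝ} [IsProbabilityMeasure G] [IsProbabilityMeasure G'] {ν t : ℝ}

lemma abs_hGdens_sub_mul_fGdens_le (hG : ∀ᵐ σ2 ∂G, 0 < σ2) (hG' : ∀ᵐ σ2 ∂G', 0 < σ2) (x : ℝ)
    (hν : 0 < ν) (ht : 0 < t) :
    |hGdens G ν x t - hGdens G' ν x t| * fGdens G ν t
      ≤ pooledFactor ν x t *
          |fGdens G (ν + 1) (pooledVar ν x t) - fGdens G' (ν + 1) (pooledVar ν x t)|
        + hGdens G' ν x t * |fGdens G ν t - fGdens G' ν t| := by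
  have hf := fGdens_pos hG hν ht
  calc |hGdens G ν x t - hGdens G' ν x t| * fGdens G ν t
      = |(hGdens G ν x t * fGdens G ν t - hGdens G' ν x t * fGdens G' ν t)
          + hGdens G' ν x t * (fGdens G' ν t - fGdens G ν t)| := by
        rw [← abs_of_pos hf, ← abs_mul, abs_of_pos hf]; ring_nf
    _ ≤ _ := abs_add_le _ _
    _ = _ := by
        rw [hGdens_mul_fGdens hG x hν ht, hGdens_mul_fGdens hG' x hν ht, ← mul_sub, abs_mul,
          abs_mul, abs_of_nonneg (pooledFactor_nonneg hν ht),
          abs_of_nonneg (hGdens_nonneg hG' x hν ht), abs_sub_comm (fGdens G' ν t)]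

lemma setLIntegral_abs_hGdens_sub_mul_le (hG : ∀ᵐ σ2 ∂G, 0 < σ2) (hG' : ∀ᵐ σ2 ∂G', 0 < σ2)
    (s : Set ℝ) (hν : 0 < ν) (ht : 0 < t) :
    (∫⁻ x in s, ENNReal.ofReal |hGdens G ν x t - hGdens G' ν x t|) * ENNReal.ofReal (fGdens G ν t)
      ≤ (∫⁻ x in s, ENNReal.ofReal (pooledFactor ν x t *
          |fGdens G (ν + 1) (pooledVar ν x t) - fGdens G' (ν + 1) (pooledVar ν x t)|))
        + ENNReal.ofReal |fGdens G ν t - fGdens G' ν t| := by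
  set δ := |fGdens G ν t - fGdens G' ν t|
  have hmass : (∫⁻ x in s, ENNReal.ofReal (hGdens G' ν x t)) * ENNReal.ofReal δ
      ≤ ENNReal.ofReal δ := by
    grw [setLIntegral_le_lintegral, lintegral_hGdens hG' hν ht, one_mul]
  rw [← lintegral_mul_const' _ _ ENNReal.ofReal_ne_top]
  calc ∫⁻ x in s, ENNReal.ofReal |hGdens G ν x t - hGdens G' ν x t| * ENNReal.ofReal (fGdens G ν t)
      ≤ ∫⁻ x in s, (ENNReal.ofReal (pooledFactor ν x t *
          |fGdens G (ν + 1) (pooledVar ν x t) - fGdens G' (ν + 1) (pooledVar ν x t)|)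
          + ENNReal.ofReal (hGdens G' ν x t) * ENNReal.ofReal δ) := by
        refine lintegral_mono fun x => ?_
        rw [← ENNReal.ofReal_mul (abs_nonneg _), ← ENNReal.ofReal_mul (hGdens_nonneg hG' x hν ht)]
        exact (ENNReal.ofReal_le_ofReal (abs_hGdens_sub_mul_fGdens_le hG hG' x hν ht)).trans
          ENNReal.ofReal_add_le
    _ ≤ _ := by
        rw [lintegral_add_left' (by unfold pooledFactor pooledVar; fun_prop),
          lintegral_mul_const' _ _ ENNReal.ofReal_ne_top]
        gcongr

end TwoMixtures

lemma lintegral_Ioc_setLIntegral_pooledFactor_le {ν a b : ℝ} (hν : 2 ≤ ν) (ha : 0 < a)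
    (hb : 0 < b) {Δ : ℝ → ℝ} (hΔ : Measurable Δ) :
    ∫⁻ t in Set.Ioc 0 b, ∫⁻ x in {x : ℝ | a < |x|},
        ENNReal.ofReal (pooledFactor ν x t * |Δ (pooledVar ν x t)|)
      ≤ ENNReal.ofReal (2 * (ν + 1) * (pooledConst ν * ((ν + 1) / ν) ^ (ν / 2 - 1)) * (b / a)) *
          (∫⁻ v in Set.Ioi 0, ENNReal.ofReal (Δ v ^ 2)) ^ (1 / 2 : ℝ) := by
  have hν0 : 0 < ν := by linarith
  set K := pooledConst ν * ((ν + 1) / ν) ^ (ν / 2 - 1)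
  have hK : 0 ≤ K := by have := pooledConst_pos hν0; positivity
  have hr : 0 < a ^ 2 / (ν + 1) := by positivity
  calc ∫⁻ t in Set.Ioc 0 b, ∫⁻ x in {x : ℝ | a < |x|},
        ENNReal.ofReal (pooledFactor ν x t * |Δ (pooledVar ν x t)|)
      ≤ ∫⁻ t in Set.Ioc 0 b, ∫⁻ x in {x : ℝ | a < |x|},
          ENNReal.ofReal (K / √(pooledVar ν x t) * |Δ (pooledVar ν x t)|) :=
        setLIntegral_mono' measurableSet_Ioc fun t ht => lintegral_mono fun x => by
          gcongr; exact pooledFactor_le x hν ht.1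
    _ ≤ ∫⁻ v in Set.Ioi (a ^ 2 / (ν + 1)),
          ENNReal.ofReal (2 * √(ν + 1) * b / √v) * ENNReal.ofReal (K / √v * |Δ v|) :=
        lintegral_Ioc_setLIntegral_abs_gt_le hν0 (by positivity) ha.le hb.le
          (F := fun v => ENNReal.ofReal (K / √v * |Δ v|)) (by fun_prop)
    _ = ∫⁻ v in Set.Ioi (a ^ 2 / (ν + 1)),
          ENNReal.ofReal (2 * √(ν + 1) * b * K / v) * ENNReal.ofReal |Δ v| := by
        refine setLIntegral_congr_fun measurableSet_Ioi fun v hv => ?_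
        have hv0 : 0 < v := hr.trans hv
        rw [← ENNReal.ofReal_mul (by positivity), ← ENNReal.ofReal_mul (by positivity)]
        congr 1
        field_simp
        rw [sq_sqrt hv0.le]
        ring
    _ ≤ ENNReal.ofReal (2 * √(ν + 1) * b * K / √(a ^ 2 / (ν + 1))) *
          (∫⁻ v in Set.Ioi (a ^ 2 / (ν + 1)), ENNReal.ofReal (Δ v ^ 2)) ^ (1 / 2 : ℝ) :=
        setLIntegral_Ioi_ofReal_div_mul_le hr (by positivity) hΔ
    _ ≤ _ := by
        gcongr ?_ * (?_ ^ _)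
        · apply le_of_eq
          rw [sqrt_div' _ (by positivity : 0 ≤ ν + 1), sqrt_sq ha.le]
          field_simp
          rw [sq_sqrt (by positivity)]
        · exact lintegral_mono_set (Set.Ioi_subset_Ioi hr.le)

/-- tail-region `L¹`-type bound on `h_G − h_G'`, with a constant `c(ν)`
depending only on `ν ≥ 2`; the inequality is understood in `[0, ∞]`. -/
theorem stmt6 (ν : ℝ) (hν : 2 ≤ ν) :
    ∃ c : ℝ, 0 < c ∧
      ∀ (G G' : Measure ℝ), IsProbabilityMeasure G → IsProbabilityMeasure G' →
        (∀ᵐ σ2 ∂G, 0 < σ2) → (∀ᵐ σ2 ∂G', 0 < σ2) →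
        ∀ a b : ℝ, 0 < a → 0 < b →
          (∫⁻ t in Set.Ioc (0 : ℝ) b,
              (∫⁻ x in {x : ℝ | a < |x|},
                ENNReal.ofReal |hGdens G ν x t - hGdens G' ν x t|) *
              ENNReal.ofReal (fGdens G ν t))
            ≤ 2 * (ENNReal.ofReal (c * (b / a)) *
                (∫⁻ w in Set.Ioi (0 : ℝ),
                    ENNReal.ofReal ((fGdens G (ν + 1) w - fGdens G' (ν + 1) w) ^ 2)) ^
                  (1 / 2 : ℝ)
              + ∫⁻ w in Set.Ioi (0 : ℝ),
                  ENNReal.ofReal |fGdens G ν w - fGdens G' ν w|) := by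
  have hν0 : 0 < ν := by linarith
  refine ⟨2 * (ν + 1) * (pooledConst ν * ((ν + 1) / ν) ^ (ν / 2 - 1)),
    by have := pooledConst_pos hν0; positivity, ?_⟩
  intro G G' _ _ hG hG' a b ha hb
  calc _ ≤ ∫⁻ t in Set.Ioc 0 b,
          ((∫⁻ x in {x : ℝ | a < |x|}, ENNReal.ofReal (pooledFactor ν x t *
            |fGdens G (ν + 1) (pooledVar ν x t) - fGdens G' (ν + 1) (pooledVar ν x t)|))
          + ENNReal.ofReal |fGdens G ν t - fGdens G' ν t|) :=
        setLIntegral_mono' measurableSet_Ioc fun t ht =>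
          setLIntegral_abs_hGdens_sub_mul_le hG hG' _ hν0 ht.1
    _ = _ := lintegral_add_right' _ (by fun_prop)
    _ ≤ _ := add_le_add (lintegral_Ioc_setLIntegral_pooledFactor_le hν ha hb (by fun_prop))
          (lintegral_mono_set Set.Ioc_subset_Ioi_self)
    _ ≤ _ := le_mul_of_one_le_left' one_le_two
end

section
/- Let n ≥ 1, ρ ∈ (0, 1], and let ξ₁, …, ξ_n be i.i.d. Bernoulli(1 − ρ) random variables, with V_k = Σ_{j=1}^k ξ_j. Define M = max( 1, 1 + n·(1 − 2ρ − (1 − ρ)·ρ^n)/ρ ). Let T be any reverse stopping time with values in {1, …, n}, i.e. {T = k} ∈ G_k for every k, where G_k = σ(V_j : k ≤ j ≤ n). Then E[ V_T / (M + T − V_T) ] ≤ 1. -/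
/-!
The process `Y_k = V_k / (M + k - V_k)` is a supermartingale for the reverse filtration: given
`V_{k+1} = u`, exchangeability makes `V_k = u - 1` with probability `u / (k + 1)` and `V_k = u`
otherwise, and the resulting one-step inequality holds because `M ≥ 1`. Optional stopping gives
`E[Y_T] ≤ E[Y_n]`. For `V_n ~ Bin(n, 1 - ρ)` one has `Y_n ≤ V_n / (n + 1 - V_n) · n / (M + n - 1)`
and `E[V_n / (n + 1 - V_n)] = (1 - ρ) / ρ · (1 - (1 - ρ)ⁿ)`, and `M` is chosen so that the product
is at most `1`.

Everything is computed on the `2ⁿ` atoms `{ξ = x}`: optional stopping becomes a backward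
induction on `K` for `E[Y_{max T K}]`, driven by the fact that the mass of `{ξ = x, T ≤ K}` does
not change when two of the first `K + 1` coordinates of `x` are swapped.
-/

open MeasureTheory ProbabilityTheory Finset
open scoped ENNReal

/-- `V_k = Σ_{j=1}^k ξ_j`: the number of successes among the first `k` of the `ξ_j`. -/
def Vcount {Ω : Type*} {n : ℕ} (ξ : Fin n → Ω → Bool) (k : ℕ) (ω : Ω) : ℕ :=
  (Finset.univ.filter (fun j : Fin n => (j : ℕ) < k ∧ ξ j ω = true)).card

/-- The reverse filtration `G_k = σ(V_j : k ≤ j ≤ n)`. -/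
def revFilt {Ω : Type*} [MeasurableSpace Ω] {n : ℕ} (ξ : Fin n → Ω → Bool) (k : ℕ) :
    MeasurableSpace Ω :=
  ⨆ j ∈ Finset.Icc k n, MeasurableSpace.comap (fun ω => Vcount ξ j ω) inferInstance

-- `Vcount ξ k ω = prefixCount (fun i => ξ i ω) k` holds by `rfl`.
def prefixCount {n : ℕ} (x : Fin n → Bool) (k : ℕ) : ℕ :=
  #{j : Fin n | (j : ℕ) < k ∧ x j = true}

namespace prefixCount

variable {n : ℕ} (x : Fin n → Bool)

lemma eq_sum (k : ℕ) :
    prefixCount x k = ∑ j : Fin n, if (j : ℕ) < k ∧ x j = true then 1 else 0 :=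
  card_filter _ _

lemma le (k : ℕ) : prefixCount x k ≤ k := by
  calc prefixCount x k ≤ #{j : Fin n | (j : ℕ) < k} :=
        card_le_card (monotone_filter_right _ fun _ _ h => h.1)
    _ = min n k := Fin.card_filter_val_lt
    _ ≤ k := min_le_right n k

lemma of_le {k : ℕ} (h : n ≤ k) : prefixCount x k = #{j : Fin n | x j = true} := by
  unfold prefixCount
  congr 1
  exact filter_congr fun j _ => and_iff_right (j.isLt.trans_le h)

lemma comp_perm {k : ℕ} (π : Equiv.Perm (Fin n)) (hπ : ∀ i, (π i : ℕ) < k ↔ (i : ℕ) < k) :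
    prefixCount (x ∘ π) k = prefixCount x k := by
  rw [eq_sum, eq_sum,
    ← Equiv.sum_comp π (fun j => if (j : ℕ) < k ∧ x j = true then 1 else 0)]
  simp only [Function.comp_apply, hπ]

lemma comp_swap {k : ℕ} {i j : Fin n} (hi : (i : ℕ) < k) (hj : (j : ℕ) < k) :
    prefixCount (x ∘ Equiv.swap i j) k = prefixCount x k :=
  comp_perm x _ fun l => by
    rcases eq_or_ne l i with rfl | hli
    · simp [hi, hj]
    rcases eq_or_ne l j with rfl | hlj
    · simp [hi, hj]
    rw [Equiv.swap_apply_of_ne_of_ne hli hlj]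

lemma succ {k : ℕ} (hk : k < n) :
    prefixCount x (k + 1) = prefixCount x k + if x ⟨k, hk⟩ = true then 1 else 0 := by
  have hlast : (if x ⟨k, hk⟩ = true then 1 else 0) =
      ∑ j : Fin n, if (j : ℕ) = k ∧ x j = true then 1 else 0 := by
    rw [Fintype.sum_eq_single ⟨k, hk⟩ fun j hj => if_neg fun h => hj (Fin.ext h.1)]
    simp
  rw [hlast, eq_sum, eq_sum, ← sum_add_distrib]
  refine Fintype.sum_congr _ _ fun j => ?_
  by_cases h1 : (j : ℕ) < k <;> by_cases h2 : (j : ℕ) = k <;> by_cases h3 : x j = true <;>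
    simp [h1, h2, h3] <;> omega

lemma comp_swap_add {K : ℕ} (hK : K < n) {i : Fin n} (hi : (i : ℕ) < K + 1) :
    prefixCount (x ∘ Equiv.swap i ⟨K, hK⟩) K + (if x i = true then 1 else 0) =
      prefixCount x (K + 1) := by
  rw [← comp_swap x hi (j := ⟨K, hK⟩) (Nat.lt_succ_self K), succ _ hK]
  simp

end prefixCount

lemma sum_prefixCount_eq_sum_choose {M : Type*} [AddCommMonoid M] (n : ℕ) (g : ℕ → M) :
    ∑ x : Fin n → Bool, g (prefixCount x n) = ∑ v ∈ range (n + 1), n.choose v • g v := by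
  have hbij : ∑ x : Fin n → Bool, g (prefixCount x n) =
      ∑ s ∈ (univ : Finset (Fin n)).powerset, g #s :=
    sum_nbij' (fun x => univ.filter (fun j => x j = true)) (fun s j => decide (j ∈ s))
      (by simp) (by simp) (fun x _ => by funext j; simp) (fun s _ => by ext j; simp)
      (fun x _ => by rw [prefixCount.of_le x le_rfl])
  rw [hbij, sum_powerset_apply_card, card_univ, Fintype.card_fin]

/-- Given `V_{K+1} = u`, an exchangeable sequence has `V_K = u - 1` with probability
`u / (K + 1)`, so this says that `f k V_k` is a supermartingale for the reverse filtration. -/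
def ReverseSuperharmonic (n : ℕ) (f : ℕ → ℕ → ℝ) : Prop :=
  ∀ K u, K < n → u ≤ K + 1 →
    u * f K (u - 1) + ((K + 1 - u : ℕ) : ℝ) * f K u ≤ (K + 1) * f (K + 1) u

section Exchangeable

variable {n : ℕ} {f : ℕ → ℕ → ℝ}

lemma sum_comp_swap_le (hf : ReverseSuperharmonic n f) {K : ℕ} (hK : K < n)
    (x : Fin n → Bool) :
    ∑ i ∈ univ.filter (fun i : Fin n => (i : ℕ) < K + 1),
        f K (prefixCount (x ∘ Equiv.swap i ⟨K, hK⟩) K) ≤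
      (K + 1) * f (K + 1) (prefixCount x (K + 1)) := by
  set s : Finset (Fin n) := univ.filter (fun i : Fin n => (i : ℕ) < K + 1)
  set u := prefixCount x (K + 1)
  have hterm : ∀ i ∈ s, f K (prefixCount (x ∘ Equiv.swap i ⟨K, hK⟩) K) =
      if x i = true then f K (u - 1) else f K u := by
    intro i hi
    have := prefixCount.comp_swap_add x hK (mem_filter.1 hi).2
    split_ifs at this ⊢ <;> exact congrArg _ (by omega)
  have hcard : #s = K + 1 := by rw [Fin.card_filter_val_lt, min_eq_right hK]
  have htrue : #(s.filter (fun i => x i = true)) = u := by rw [filter_filter]; rfl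
  have hfalse : #(s.filter (fun i => ¬ x i = true)) = K + 1 - u := by
    rw [filter_not, card_sdiff_of_subset (filter_subset _ _), hcard, htrue]
  rw [sum_congr rfl hterm, sum_ite, sum_const, sum_const, htrue, hfalse, nsmul_eq_mul,
    nsmul_eq_mul]
  exact hf K u hK (prefixCount.le x _)

lemma sum_mul_le_sum_mul_succ (hf : ReverseSuperharmonic n f) {K : ℕ} (hK : K < n)
    {m : (Fin n → Bool) → ℝ} (hm0 : ∀ x, 0 ≤ m x)
    (hm : ∀ i j : Fin n, (i : ℕ) < K + 1 → (j : ℕ) < K + 1 →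
      ∀ x, m (x ∘ Equiv.swap i j) = m x) :
    ∑ x, m x * f K (prefixCount x K) ≤ ∑ x, m x * f (K + 1) (prefixCount x (K + 1)) := by
  set κ : Fin n := ⟨K, hK⟩
  set s : Finset (Fin n) := univ.filter (fun i : Fin n => (i : ℕ) < K + 1)
  have hcard : #s = K + 1 := by rw [Fin.card_filter_val_lt, min_eq_right hK]
  have hreindex : ∀ i ∈ s, ∑ x, m x * f K (prefixCount x K) =
      ∑ x, m x * f K (prefixCount (x ∘ Equiv.swap i κ) K) := by
    intro i hi
    have hinv : Function.Involutive (fun x : Fin n → Bool => x ∘ Equiv.swap i κ) := fun x => by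
      funext j; simp
    refine Fintype.sum_bijective _ hinv.bijective _ _ fun x => ?_
    rw [hm i κ (mem_filter.1 hi).2 (Nat.lt_succ_self K), show (x ∘ _) ∘ _ = x from hinv x]
  have hK1 : (0 : ℝ) < K + 1 := by positivity
  refine le_of_mul_le_mul_left ?_ hK1
  calc ((K : ℝ) + 1) * ∑ x, m x * f K (prefixCount x K)
      = ∑ i ∈ s, ∑ x, m x * f K (prefixCount (x ∘ Equiv.swap i κ) K) := by
        rw [← sum_congr rfl hreindex, sum_const, hcard, nsmul_eq_mul]; push_cast; ring
    _ = ∑ x, m x * ∑ i ∈ s, f K (prefixCount (x ∘ Equiv.swap i κ) K) := by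
        rw [sum_comm]; simp only [mul_sum]
    _ ≤ ∑ x, m x * ((K + 1) * f (K + 1) (prefixCount x (K + 1))) :=
        sum_le_sum fun x _ => mul_le_mul_of_nonneg_left (sum_comp_swap_le hf hK x) (hm0 x)
    _ = (K + 1) * ∑ x, m x * f (K + 1) (prefixCount x (K + 1)) := by
        rw [mul_sum]; exact sum_congr rfl fun x _ => by ring

end Exchangeable

theorem sum_stopped_le_sum_terminal {n : ℕ} {f : ℕ → ℕ → ℝ} (hf : ReverseSuperharmonic n f)
    {μ : (Fin n → Bool) → ℕ → ℝ} (hμ : ∀ x k, 0 ≤ μ x k)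
    (hexch : ∀ K < n, ∀ i j : Fin n, (i : ℕ) < K + 1 → (j : ℕ) < K + 1 →
      ∀ x, ∑ k ∈ Icc 1 K, μ (x ∘ Equiv.swap i j) k = ∑ k ∈ Icc 1 K, μ x k) :
    ∑ x, ∑ k ∈ Icc 1 n, μ x k * f k (prefixCount x k) ≤
      ∑ x, (∑ k ∈ Icc 1 n, μ x k) * f n (prefixCount x n) := by
  -- `B K` is `E[f (max T K) V_{max T K}]` when `μ x k` is the mass of `{ξ = x, T = k}`.
  let B : ℕ → ℝ := fun K => ∑ x, (∑ k ∈ Icc 1 K, μ x k) * f K (prefixCount x K) +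
    ∑ x, ∑ k ∈ Icc (K + 1) n, μ x k * f k (prefixCount x k)
  have hstep : ∀ K < n, B K ≤ B (K + 1) := by
    intro K hK
    have hle := sum_mul_le_sum_mul_succ hf hK (fun x => sum_nonneg fun k _ => hμ x k)
      (hexch K hK)
    simp only [B, sum_Icc_succ_top (Nat.le_add_left 1 K), add_mul, sum_add_distrib,
      ← insert_Icc_add_one_left_eq_Icc (Nat.succ_le_of_lt hK),
      sum_insert (fun h => by simp at h : K + 1 ∉ Icc (K + 1 + 1) n)]
    linarith
  have hmono : ∀ K ≤ n, B 0 ≤ B K := by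
    intro K hK
    induction K with
    | zero => exact le_rfl
    | succ K ih => exact (ih (by omega)).trans (hstep K (by omega))
  simpa [B] using hmono n le_rfl

noncomputable def ratio (M : ℝ) (k v : ℕ) : ℝ := v / (M + k - v)

lemma ratio_nonneg {M : ℝ} (hM : 1 ≤ M) {k v : ℕ} (hv : v ≤ k) : 0 ≤ ratio M k v := by
  have : (v : ℝ) ≤ k := by exact_mod_cast hv
  exact div_nonneg (Nat.cast_nonneg v) (by linarith)

lemma reverseSuperharmonic_ratio {M : ℝ} (hM : 1 ≤ M) (n : ℕ) :
    ReverseSuperharmonic n (ratio M) := by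
  intro K u _ hu
  rcases Nat.eq_zero_or_pos u with rfl | hu0
  · simp [ratio]
  simp only [ratio, Nat.cast_sub hu, Nat.cast_sub hu0]
  push_cast
  -- for `u = K + 1` the coefficient of `ratio M K u` vanishes, and its denominator may be `0`
  rcases hu.lt_or_eq with hlt | rfl
  · have huK : (u : ℝ) + 1 ≤ K + 1 := by exact_mod_cast hlt
    have hD : (0 : ℝ) < M + K - u := by linarith
    rw [show M + K - ((u : ℝ) - 1) = M + K - u + 1 by ring,
      show M + (K + 1) - (u : ℝ) = M + K - u + 1 by ring]
    have hlast :
        ((K : ℝ) + 1 - u) * (u / (M + K - u)) ≤ (K + 2 - u) * u / (M + K - u + 1) := by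
      rw [← mul_div_assoc, div_le_div_iff₀ hD (by linarith)]
      nlinarith [mul_nonneg (Nat.cast_nonneg u : (0 : ℝ) ≤ u) (sub_nonneg.2 hM)]
    calc _ ≤ (u : ℝ) * ((u - 1) / (M + K - u + 1)) + (K + 2 - u) * u / (M + K - u + 1) :=
          add_le_add_right hlast _
      _ = _ := by field_simp; ring
  · push_cast
    rw [show M + K - ((K : ℝ) + 1 - 1) = M by ring,
      show M + (K + 1) - ((K : ℝ) + 1) = M by ring]
    simp only [sub_self, zero_mul, add_zero]
    rw [← mul_div_assoc, ← mul_div_assoc]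
    gcongr
    linarith

lemma ratio_le_mul {M : ℝ} (hM : 1 ≤ M) {n v : ℕ} (hn : 1 ≤ n) (hv : v ≤ n) :
    ratio M n v ≤ v / (n + 1 - v) * (n / (M + n - 1)) := by
  rcases Nat.eq_zero_or_pos v with rfl | hv0
  · simp [ratio]
  have hv1 : (1 : ℝ) ≤ v := by exact_mod_cast hv0
  have hvn : (v : ℝ) ≤ n := by exact_mod_cast hv
  have hn1 : (1 : ℝ) ≤ n := by exact_mod_cast hn
  rw [ratio, div_mul_div_comm, div_le_div_iff₀ (by linarith) (by nlinarith)]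
  nlinarith [mul_nonneg (mul_nonneg (sub_nonneg.2 hM) (sub_nonneg.2 hv1))
    (Nat.cast_nonneg v : (0 : ℝ) ≤ v)]

lemma sum_choose_mul_div {ρ : ℝ} (hρ : 0 < ρ) (n : ℕ) :
    ∑ v ∈ range (n + 1), (n.choose v : ℝ) * (1 - ρ) ^ v * ρ ^ (n - v) * (v / (n + 1 - v)) =
      (1 - ρ) / ρ * (1 - (1 - ρ) ^ n) := by
  have hshift : ∀ v ∈ range n,
      (n.choose (v + 1) : ℝ) * (1 - ρ) ^ (v + 1) * ρ ^ (n - (v + 1)) *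
          (((v + 1 : ℕ) : ℝ) / (n + 1 - (v + 1 : ℕ))) =
        (1 - ρ) / ρ * ((n.choose v : ℝ) * (1 - ρ) ^ v * ρ ^ (n - v)) := by
    intro v hv
    have hvn : v < n := mem_range.1 hv
    have hchoose : (n.choose (v + 1) : ℝ) * (v + 1) = n.choose v * (n - v) := by
      rw [← Nat.cast_sub hvn.le]
      exact_mod_cast Nat.choose_succ_right_eq n v
    have hpos : (0 : ℝ) < n - v := sub_pos.2 (by exact_mod_cast hvn)
    rw [show n - v = n - (v + 1) + 1 by omega, pow_succ, pow_succ]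
    push_cast
    rw [show (n : ℝ) + 1 - (v + 1) = n - v by ring]
    field_simp
    linear_combination (1 - ρ) * (1 - ρ) ^ v * hchoose
  rw [sum_range_succ', sum_congr rfl hshift, ← mul_sum]
  have hbinom := add_pow (1 - ρ) ρ n
  rw [sub_add_cancel, one_pow, sum_range_succ] at hbinom
  simp only [Nat.choose_self, Nat.sub_self, pow_zero, Nat.cast_one, mul_one] at hbinom
  simp only [Nat.cast_zero, zero_div, mul_zero, add_zero]
  congr 1
  have hcomm : ∑ v ∈ range n, (n.choose v : ℝ) * (1 - ρ) ^ v * ρ ^ (n - v) =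
      ∑ v ∈ range n, (1 - ρ) ^ v * ρ ^ (n - v) * n.choose v :=
    sum_congr rfl fun v _ => by ring
  linarith

noncomputable def cutoff (n : ℕ) (ρ : ℝ) : ℝ :=
  max 1 (1 + (n : ℝ) * (1 - 2 * ρ - (1 - ρ) * ρ ^ n) / ρ)

lemma one_le_cutoff (n : ℕ) (ρ : ℝ) : 1 ≤ cutoff n ρ := le_max_left _ _

lemma mul_one_sub_pow_le_cutoff {ρ : ℝ} (hρ : ρ ∈ Set.Ioc (0 : ℝ) 1) (n : ℕ) :
    n * (1 - ρ) * (1 - (1 - ρ) ^ n) ≤ ρ * (cutoff n ρ + n - 1) := by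
  obtain ⟨hρ0, hρ1⟩ := hρ
  have hqn : 0 ≤ (1 - ρ) ^ n := pow_nonneg (by linarith) n
  have hn : (0 : ℝ) ≤ n := Nat.cast_nonneg n
  rcases le_total ρ (1 - ρ) with hle | hle
  · have hM : (n : ℝ) * (1 - 2 * ρ - (1 - ρ) * ρ ^ n) ≤ ρ * (cutoff n ρ - 1) := by
      have h : 1 + (n : ℝ) * (1 - 2 * ρ - (1 - ρ) * ρ ^ n) / ρ ≤ cutoff n ρ :=
        le_max_right _ _
      rw [mul_comm ρ, ← div_le_iff₀ hρ0]
      linarith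
    have hpow : ρ ^ n ≤ (1 - ρ) ^ n := pow_le_pow_left₀ hρ0.le hle n
    nlinarith [mul_le_mul_of_nonneg_left hpow (mul_nonneg hn (by linarith : (0 : ℝ) ≤ 1 - ρ))]
  · nlinarith [one_le_cutoff n ρ, mul_nonneg hn hqn,
      mul_nonneg (mul_nonneg hn hqn) (by linarith : (0 : ℝ) ≤ 1 - ρ)]

lemma sum_choose_mul_ratio_le_one {ρ : ℝ} (hρ : ρ ∈ Set.Ioc (0 : ℝ) 1) {n : ℕ}
    (hn : 1 ≤ n) :
    ∑ v ∈ range (n + 1), (n.choose v : ℝ) * ((1 - ρ) ^ v * ρ ^ (n - v)) *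
      ratio (cutoff n ρ) n v ≤ 1 := by
  have hM := one_le_cutoff n ρ
  have hn1 : (1 : ℝ) ≤ n := by exact_mod_cast hn
  have hρ0 := hρ.1
  calc _ ≤ ∑ v ∈ range (n + 1), (n.choose v : ℝ) * (1 - ρ) ^ v * ρ ^ (n - v) *
        (v / (n + 1 - v)) * (n / (cutoff n ρ + n - 1)) := by
        refine sum_le_sum fun v hv => ?_
        have hw : (0 : ℝ) ≤ n.choose v * ((1 - ρ) ^ v * ρ ^ (n - v)) :=
          mul_nonneg (Nat.cast_nonneg _)
            (mul_nonneg (pow_nonneg (by linarith [hρ.2]) _) (pow_nonneg hρ0.le _))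
        calc _ ≤ (n.choose v : ℝ) * ((1 - ρ) ^ v * ρ ^ (n - v)) *
              (v / (n + 1 - v) * (n / (cutoff n ρ + n - 1))) :=
              mul_le_mul_of_nonneg_left
                (ratio_le_mul hM hn (Nat.lt_succ_iff.1 (mem_range.1 hv))) hw
          _ = _ := by ring
    _ = (1 - ρ) / ρ * (1 - (1 - ρ) ^ n) * (n / (cutoff n ρ + n - 1)) := by
        rw [← sum_mul, sum_choose_mul_div hρ0]
    _ ≤ 1 := by
        rw [div_mul_eq_mul_div, div_mul_div_comm, div_le_one (by nlinarith)]
        linarith [mul_one_sub_pow_le_cutoff hρ n]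

section RevFilt

variable {Ω : Type*} [MeasurableSpace Ω] {n : ℕ} {ξ : Fin n → Ω → Bool}

lemma mem_iff_of_measurableSet_revFilt {k : ℕ} {s : Set Ω} (hs : MeasurableSet[revFilt ξ k] s)
    {ω ω' : Ω} (h : ∀ j ∈ Icc k n, Vcount ξ j ω = Vcount ξ j ω') : ω ∈ s ↔ ω' ∈ s := by
  let F : Ω → Icc k n → ℕ := fun ω j => Vcount ξ j ω
  have hle : revFilt ξ k ≤ MeasurableSpace.comap F ⊤ := iSup₂_le fun j hj =>
    calc _ = MeasurableSpace.comap F (MeasurableSpace.comap (fun v => v ⟨j, hj⟩) ⊤) :=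
          MeasurableSpace.comap_comp.symm
      _ ≤ _ := MeasurableSpace.comap_mono le_top
  obtain ⟨t, -, rfl⟩ := hle s hs
  have : F ω = F ω' := funext fun j => h j j.2
  simp only [Set.mem_preimage, this]

lemma measurable_Vcount (hmeas : ∀ i, Measurable (ξ i)) (k : ℕ) : Measurable (Vcount ξ k) :=
  (measurable_of_finite (prefixCount · k)).comp (measurable_pi_lambda _ hmeas)

lemma revFilt_le (hmeas : ∀ i, Measurable (ξ i)) (k : ℕ) :
    revFilt ξ k ≤ ‹MeasurableSpace Ω› :=
  iSup₂_le fun j _ => (measurable_Vcount hmeas j).comap_le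

lemma le_iff_le_of_revFilt {T : Ω → ℕ}
    (hTstop : ∀ k, MeasurableSet[revFilt ξ k] {ω | T ω = k}) {K : ℕ} {ω ω' : Ω}
    (h : ∀ j, K < j → Vcount ξ j ω = Vcount ξ j ω') : T ω ≤ K ↔ T ω' ≤ K := by
  have key : ∀ ω ω', (∀ j, K < j → Vcount ξ j ω = Vcount ξ j ω') → K < T ω' → T ω = T ω' :=
    fun ω ω' h hlt => (mem_iff_of_measurableSet_revFilt (hTstop (T ω'))
      fun j hj => h j (hlt.trans_le (mem_Icc.1 hj).1)).2 rfl
  constructor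
  · intro hω
    by_contra! hlt
    exact absurd (key ω ω' h hlt) (by omega)
  · intro hω'
    by_contra! hlt
    exact absurd (key ω' ω (fun j hj => (h j hj).symm) hlt) (by omega)

end RevFilt

section Measure

variable {Ω α : Type*} [MeasurableSpace Ω] {P : Measure Ω}

lemma lintegral_comp_eq_sum [MeasurableSpace α] {X : Ω → α} {s : Finset α}
    (hs : ∀ ω, X ω ∈ s) (hX : ∀ a ∈ s, MeasurableSet (X ⁻¹' {a})) (g : α → ℝ≥0∞) :
    ∫⁻ ω, g (X ω) ∂P = ∑ a ∈ s, g a * P (X ⁻¹' {a}) := by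
  have hsum : (fun ω => g (X ω)) =
      fun ω => ∑ a ∈ s, (X ⁻¹' {a}).indicator (fun _ => g a) ω := by
    funext ω
    rw [sum_eq_single_of_mem (X ω) (hs ω) fun a _ ha =>
      Set.indicator_of_notMem (fun h => ha h.symm) _]
    exact (Set.indicator_of_mem rfl _).symm
  rw [hsum, lintegral_finsetSum _ fun a ha => measurable_const.indicator (hX a ha)]
  exact sum_congr rfl fun a ha => lintegral_indicator_const (hX a ha) _

lemma measure_inter_preimage_eq_of_determined {X : Ω → α} {E : Set Ω} {R : α → α → Prop}
    (hE : ∀ ω ω', R (X ω) (X ω') → (ω ∈ E ↔ ω' ∈ E)) {x y : α} (hxy : R x y)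
    (hP : P (X ⁻¹' {x}) = P (X ⁻¹' {y})) : P (E ∩ X ⁻¹' {x}) = P (E ∩ X ⁻¹' {y}) := by
  rcases (X ⁻¹' {x}).eq_empty_or_nonempty with hx | ⟨ω, hω⟩
  · rw [hx, measure_empty] at hP
    rw [hx, Set.inter_empty, measure_empty, measure_mono_null Set.inter_subset_right hP.symm]
  rcases (X ⁻¹' {y}).eq_empty_or_nonempty with hy | ⟨ω', hω'⟩
  · rw [hy, measure_empty] at hP
    rw [hy, Set.inter_empty, measure_empty, measure_mono_null Set.inter_subset_right hP]
  have hx : ∀ ω₁ ∈ X ⁻¹' {x}, ω₁ ∈ E ↔ ω' ∈ E := fun ω₁ h₁ => hE ω₁ ω' (by rwa [h₁, hω'])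
  have hy : ∀ ω₂ ∈ X ⁻¹' {y}, ω ∈ E ↔ ω₂ ∈ E := fun ω₂ h₂ => hE ω ω₂ (by rwa [h₂, hω])
  by_cases hωE : ω ∈ E
  · have hω'E := (hx ω hω).1 hωE
    rw [Set.inter_eq_right.2 fun ω₁ h₁ => (hx ω₁ h₁).2 hω'E,
      Set.inter_eq_right.2 fun ω₂ h₂ => (hy ω₂ h₂).1 hωE, hP]
  · have hω'E : ω' ∉ E := fun h => hωE ((hx ω hω).2 h)
    rw [Set.eq_empty_of_forall_notMem (s := E ∩ X ⁻¹' {x})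
        fun ω₁ h₁ => hω'E ((hx ω₁ h₁.2).1 h₁.1),
      Set.eq_empty_of_forall_notMem (s := E ∩ X ⁻¹' {y})
        fun ω₂ h₂ => hωE ((hy ω₂ h₂.2).2 h₂.1)]

lemma measure_preimage_eq_bernoulli [IsProbabilityMeasure P] {n : ℕ} {ξ : Fin n → Ω → Bool}
    (hmeas : ∀ i, Measurable (ξ i)) (hindep : iIndepFun ξ P) {p : ℝ} (hp0 : 0 ≤ p) (hp1 : p ≤ 1)
    (hbern : ∀ i, P {ω | ξ i ω = true} = ENNReal.ofReal p) (x : Fin n → Bool) :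
    P ((fun ω i => ξ i ω) ⁻¹' {x}) =
      ENNReal.ofReal (p ^ #{i | x i = true} * (1 - p) ^ (n - #{i | x i = true})) := by
  have hfactor : ∀ i, P (ξ i ⁻¹' {x i}) =
      if x i = true then ENNReal.ofReal p else ENNReal.ofReal (1 - p) := by
    intro i
    have htrue : ξ i ⁻¹' {true} = {ω | ξ i ω = true} := rfl
    have hfalse : ξ i ⁻¹' {false} = {ω | ξ i ω = true}ᶜ := by ext; simp
    cases x i
    · rw [if_neg Bool.false_ne_true, hfalse,
        prob_compl_eq_one_sub (htrue ▸ hmeas i (measurableSet_singleton true)), hbern i,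
        ← ENNReal.ofReal_one, ← ENNReal.ofReal_sub _ hp0]
    · rw [if_pos rfl, htrue, hbern i]
  have hcap : (fun ω i => ξ i ω) ⁻¹' {x} = ⋂ i ∈ (univ : Finset (Fin n)), ξ i ⁻¹' {x i} := by
    ext ω; simp [funext_iff]
  rw [hcap, hindep.measure_inter_preimage_eq_mul univ fun i _ => measurableSet_singleton _,
    prod_congr rfl fun i _ => hfactor i, prod_ite, prod_const, prod_const, filter_not,
    card_sdiff_of_subset (filter_subset _ _), card_univ, Fintype.card_fin,
    ENNReal.ofReal_mul (pow_nonneg hp0 _), ENNReal.ofReal_pow hp0,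
    ENNReal.ofReal_pow (sub_nonneg.2 hp1)]

end Measure

section Stopped

variable {Ω : Type*} [MeasurableSpace Ω] {P : Measure Ω} {n : ℕ} {ξ : Fin n → Ω → Bool}
  {T : Ω → ℕ}

lemma lintegral_ofReal_stopped [IsFiniteMeasure P] (hmeas : ∀ i, Measurable (ξ i))
    (hT : Measurable T) (hTval : ∀ ω, T ω ∈ Icc 1 n) {f : ℕ → ℕ → ℝ}
    (hf : ∀ k v, v ≤ k → 0 ≤ f k v) :
    ∫⁻ ω, ENNReal.ofReal (f (T ω) (Vcount ξ (T ω) ω)) ∂P =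
      ENNReal.ofReal (∑ x, ∑ k ∈ Icc 1 n,
        (P (T ⁻¹' {k} ∩ (fun ω i => ξ i ω) ⁻¹' {x})).toReal * f k (prefixCount x k)) := by
  have hpre : ∀ a : (Fin n → Bool) × ℕ, (fun ω => ((fun i => ξ i ω), T ω)) ⁻¹' {a} =
      T ⁻¹' {a.2} ∩ (fun ω i => ξ i ω) ⁻¹' {a.1} := by
    rintro ⟨x, k⟩
    rw [← Set.singleton_prod_singleton, Set.mk_preimage_prod, Set.inter_comm]
  have hmeas' : ∀ a : (Fin n → Bool) × ℕ,
      MeasurableSet (T ⁻¹' {a.2} ∩ (fun ω i => ξ i ω) ⁻¹' {a.1}) :=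
    fun a => (hT (measurableSet_singleton _)).inter
      (measurable_pi_lambda _ hmeas (measurableSet_singleton _))
  refine (lintegral_comp_eq_sum (X := fun ω => ((fun i => ξ i ω), T ω))
      (s := univ ×ˢ Icc 1 n)
      (fun ω => mem_product.2 ⟨mem_univ _, hTval ω⟩) (fun a _ => hpre a ▸ hmeas' a)
      (fun a => ENNReal.ofReal (f a.2 (prefixCount a.1 a.2)))).trans ?_
  rw [sum_product, ENNReal.ofReal_sum_of_nonneg fun x _ => sum_nonneg fun k hk =>
      mul_nonneg ENNReal.toReal_nonneg (hf _ _ (prefixCount.le x k))]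
  refine sum_congr rfl fun x _ => ?_
  rw [ENNReal.ofReal_sum_of_nonneg fun k _ =>
    mul_nonneg ENNReal.toReal_nonneg (hf _ _ (prefixCount.le x k))]
  refine sum_congr rfl fun k _ => ?_
  rw [hpre, mul_comm, ENNReal.ofReal_mul ENNReal.toReal_nonneg,
    ENNReal.ofReal_toReal (measure_ne_top _ _)]

lemma sum_measure_stopped_eq [IsFiniteMeasure P] (hT : Measurable T) (S : Finset ℕ)
    (A : Set Ω) :
    ∑ k ∈ S, (P (T ⁻¹' {k} ∩ A)).toReal = (P (T ⁻¹' S ∩ A)).toReal := by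
  rw [← ENNReal.toReal_sum fun k _ => measure_ne_top _ _]
  congr 1
  simpa only [Measure.restrict_apply (hT (measurableSet_singleton _)),
    Measure.restrict_apply (hT S.measurableSet)] using
    sum_measure_preimage_singleton (μ := P.restrict A) S fun k _ => hT (measurableSet_singleton k)

lemma measure_stopped_comp_swap (hTval : ∀ ω, T ω ∈ Icc 1 n)
    (hTstop : ∀ k, MeasurableSet[revFilt ξ k] {ω | T ω = k})
    (hlaw : ∀ x y : Fin n → Bool, #{l | x l = true} = #{l | y l = true} →
      P ((fun ω i => ξ i ω) ⁻¹' {x}) = P ((fun ω i => ξ i ω) ⁻¹' {y}))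
    {K : ℕ} {i j : Fin n} (hi : (i : ℕ) < K + 1) (hj : (j : ℕ) < K + 1) (x : Fin n → Bool) :
    P (T ⁻¹' (Icc 1 K) ∩ (fun ω i => ξ i ω) ⁻¹' {x ∘ Equiv.swap i j}) =
      P (T ⁻¹' (Icc 1 K) ∩ (fun ω i => ξ i ω) ⁻¹' {x}) := by
  refine measure_inter_preimage_eq_of_determined
    (R := fun y z => ∀ m, K < m → prefixCount y m = prefixCount z m) (fun ω ω' h => ?_)
    (fun m hm => prefixCount.comp_swap x (hi.trans_le hm) (hj.trans_le hm)) (hlaw _ _ ?_)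
  · simp only [Set.mem_preimage, coe_Icc, Set.mem_Icc, (mem_Icc.1 (hTval ω)).1,
      (mem_Icc.1 (hTval ω')).1, true_and]
    exact le_iff_le_of_revFilt hTstop h
  · rw [← prefixCount.of_le _ le_rfl, ← prefixCount.of_le _ le_rfl]
    exact prefixCount.comp_swap x i.2 j.2

end Stopped

/-- optional-stopping bound. For i.i.d. Bernoulli(1 − ρ) variables,
`M = max(1, 1 + n·(1 − 2ρ − (1 − ρ)·ρⁿ)/ρ)`, and any reverse stopping time `T` with
values in `{1, …, n}`, we have `E[V_T/(M + T − V_T)] ≤ 1`. -/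
theorem stmt15 {Ω : Type*} [MeasurableSpace Ω] (P : Measure Ω) [IsProbabilityMeasure P]
    (n : ℕ) (hn : 1 ≤ n) (ρ : ℝ) (hρ : ρ ∈ Set.Ioc (0 : ℝ) 1)
    (ξ : Fin n → Ω → Bool) (hmeas : ∀ i, Measurable (ξ i))
    (hindep : iIndepFun ξ P)
    (hbern : ∀ i, P {ω | ξ i ω = true} = ENNReal.ofReal (1 - ρ))
    (T : Ω → ℕ) (hTval : ∀ ω, T ω ∈ Finset.Icc 1 n)
    (hTstop : ∀ k, MeasurableSet[revFilt ξ k] {ω | T ω = k}) :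
    ∫⁻ ω, ENNReal.ofReal
        ((Vcount ξ (T ω) ω : ℝ) /
          (max 1 (1 + (n : ℝ) * (1 - 2 * ρ - (1 - ρ) * ρ ^ n) / ρ) +
            T ω - Vcount ξ (T ω) ω)) ∂P
      ≤ 1 := by
  have hT : Measurable T := measurable_to_countable' fun k => revFilt_le hmeas k _ (hTstop k)
  have hlaw := measure_preimage_eq_bernoulli hmeas hindep (sub_nonneg.2 hρ.2)
    (sub_le_self 1 hρ.1.le) hbern
  simp only [sub_sub_cancel] at hlaw
  have hM := one_le_cutoff n ρ
  change ∫⁻ ω, ENNReal.ofReal (ratio (cutoff n ρ) (T ω) (Vcount ξ (T ω) ω)) ∂P ≤ 1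
  rw [lintegral_ofReal_stopped hmeas hT hTval fun k v hv => ratio_nonneg hM hv,
    ENNReal.ofReal_le_one]
  refine (sum_stopped_le_sum_terminal (reverseSuperharmonic_ratio hM n)
    (fun _ _ => ENNReal.toReal_nonneg) fun K _ i j hi hj x => ?_).trans ?_
  · rw [sum_measure_stopped_eq hT, sum_measure_stopped_eq hT,
      measure_stopped_comp_swap hTval hTstop (fun x y h => by rw [hlaw, hlaw, h]) hi hj]
  · have hall : T ⁻¹' (Icc 1 n : Finset ℕ) = Set.univ := Set.eq_univ_of_forall hTval
    simp only [sum_measure_stopped_eq hT, hall, Set.univ_inter, hlaw,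
      ← prefixCount.of_le _ le_rfl,
      ENNReal.toReal_ofReal (mul_nonneg (pow_nonneg (sub_nonneg.2 hρ.2) _) (pow_nonneg hρ.1.le _))]
    rw [sum_prefixCount_eq_sum_choose n fun v => (1 - ρ) ^ v * ρ ^ (n - v) * ratio (cutoff n ρ) n v]
    simpa only [nsmul_eq_mul, mul_assoc] using sum_choose_mul_ratio_le_one hρ hn
end
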